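/- Let (K,|·|) be a normed field, f ∈ K[z] a polynomial of degree n ≥ 2 which splits over K, ξ ∈ Kⁿ a root-vector of f, and 1 ≤ p ≤ ∞ with conjugate exponent q. Suppose c : [0,1) → ℝ₊ is a nondecreasing function such that c(t) ≤ (n−1)^{1/p}((1+t)^{1/(n−1)} − 1) for all t ∈ [0,1), and suppose there exists σ ∈ (0,1) such that t·c(t) ≤ c(t²)·(1 − 2^{1/q}(1+t)c(t)) for all t ∈ [0,σ]. If x⁰ ∈ Kⁿ has pairwise distinct components and ‖(x⁰ − ξ)/d(x⁰)‖_p ≤ c(σ), then f has only simple zeros in K and the Weierstrass iteration x^{k+1} = x^k − W(x^k) is well defined and converges to ξ with, for all k ≥ 0 and each index i: |x^{k+1}_i − ξ_i| ≤ σ^{2^k} |x^k_i − ξ_i| and |x^k_i − ξ_i| ≤ σ^{2^k − 1} |x⁰_i − ξ_i|. -/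

import Mathlib

open Finset Filter Topology
open scoped ENNReal

noncomputable def pnorm {n : ℕ} (p : ℝ≥0∞) (v : Fin n → ℝ) : ℝ :=
  if p = ⊤ then ⨆ i, |v i| else (∑ i, |v i| ^ p.toReal) ^ (1 / p.toReal)

noncomputable def epow (a : ℝ) (p : ℝ≥0∞) : ℝ :=
  if p = ⊤ then 1 else a ^ (1 / p.toReal)

noncomputable def dsep {K : Type*} [NormedField K] {n : ℕ} (x : Fin n → K) (i : Fin n) : ℝ :=
  sInf {r : ℝ | ∃ j, j ≠ i ∧ r = ‖x i - x j‖}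

noncomputable def Wcorr {K : Type*} [NormedField K] {n : ℕ} (f : Polynomial K)
    (x : Fin n → K) (i : Fin n) : K :=
  Polynomial.eval (x i) f / (f.leadingCoeff * ∏ j ∈ Finset.univ.erase i, (x i - x j))

def IsRootVector {K : Type*} [NormedField K] {n : ℕ} (f : Polynomial K) (ξ : Fin n → K) : Prop :=
  ∀ z : K, Polynomial.eval z f = f.leadingCoeff * ∏ i, (z - ξ i)

/-!
Write `E(y) = ‖(y - ξ) / d(y)‖_p`. The Weierstrass correction factors as
`W_i(y) = (y_i - ξ_i) ∏_{j ≠ i} (1 + (y_j - ξ_j) / (y_i - y_j))`, where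
`|(y_j - ξ_j) / (y_i - y_j)| ≤ |y_j - ξ_j| / d_j(y)`. Hölder's inequality and AM-GM turn
`E(y) ≤ c(t) ≤ (n - 1)^{1/p} ((1 + t)^{1/(n-1)} - 1)` into
`∏_{j ≠ i} (1 + |y_j - ξ_j| / d_j(y)) ≤ 1 + t`, whence `|ŷ_i - ξ_i| ≤ t |y_i - ξ_i|` and
`|W_i(y)| ≤ (1 + t) |y_i - ξ_i|` for the next iterate `ŷ = y - W(y)`. The second bound keeps the
components apart, `d(ŷ) ≥ λ d(y)` with `λ = 1 - 2^{1/q} (1 + t) c(t) > 0`, so that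
`E(ŷ) ≤ t c(t) / λ ≤ c(t²)`; by induction `E(x^k) ≤ c(σ^{2^k})`. The same separation argument,
applied to `ξ` as a perturbation of `x⁰`, shows that `ξ` has distinct components.
-/

lemma Finset.norm_prod_one_add_sub_one_le_prod {ι R : Type*} [NormedCommRing R] [NormOneClass R]
    (s : Finset ι) (a : ι → R) : ‖∏ j ∈ s, (1 + a j) - 1‖ ≤ ∏ j ∈ s, (1 + ‖a j‖) - 1 := by
  classical
  induction s using Finset.induction_on with
  | empty => simp
  | insert i s hi ih =>
    rw [prod_insert hi, prod_insert hi]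
    set P := ∏ j ∈ s, (1 + a j)
    set Q := ∏ j ∈ s, (1 + ‖a j‖)
    have hP : ‖P‖ ≤ Q := by
      have := norm_le_norm_sub_add P 1
      rw [norm_one] at this
      linarith
    calc ‖(1 + a i) * P - 1‖ = ‖(P - 1) + a i * P‖ := by ring_nf
      _ ≤ ‖P - 1‖ + ‖a i‖ * ‖P‖ := (norm_add_le _ _).trans (by gcongr; exact norm_mul_le _ _)
      _ ≤ (Q - 1) + ‖a i‖ * Q := by gcongr
      _ = (1 + ‖a i‖) * Q - 1 := by ring

lemma Finset.prod_one_add_le_of_sum_le {ι : Type*} {s : Finset ι} (hs : s.Nonempty)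
    {b : ι → ℝ} (hb : ∀ j ∈ s, 0 ≤ b j) {a : ℝ} (ha : 0 ≤ a)
    (h : ∑ j ∈ s, b j ≤ #s * (a ^ (1 / #s : ℝ) - 1)) : ∏ j ∈ s, (1 + b j) ≤ a := by
  have hm : (0 : ℝ) < #s := by exact_mod_cast hs.card_pos
  have hb1 : ∀ j ∈ s, 0 ≤ 1 + b j := fun j hj => by linarith [hb j hj]
  have amgm := Real.geom_mean_le_arith_mean s (fun _ => 1) (fun j => 1 + b j)
    (fun _ _ => zero_le_one) (by simpa using hm) hb1
  simp only [Real.rpow_one, sum_const, nsmul_one, one_mul, ← one_div] at amgm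
  rw [← Real.rpow_le_rpow_iff (prod_nonneg hb1) ha (by positivity : (0:ℝ) < 1 / #s)]
  calc (∏ j ∈ s, (1 + b j)) ^ (1 / #s : ℝ) ≤ (∑ j ∈ s, (1 + b j)) / #s := amgm
    _ = 1 + (∑ j ∈ s, b j) / #s := by
        rw [sum_add_distrib, sum_const, nsmul_one]; field_simp
    _ ≤ a ^ (1 / #s : ℝ) := by
        have := (div_le_iff₀' hm).mpr h
        linarith

section pnorm

variable {n : ℕ} {p q : ℝ≥0∞}

lemma abs_le_iSup_abs (v : Fin n → ℝ) (i : Fin n) : |v i| ≤ ⨆ j, |v j| :=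
  le_ciSup (f := fun j => |v j|) (Set.finite_range _).bddAbove i

lemma pnorm_le_mul_of_abs_le (hp : p ≠ 0) {v w : Fin n → ℝ} {s : ℝ} (hs : 0 ≤ s)
    (hw : ∀ i, 0 ≤ w i) (h : ∀ i, |v i| ≤ s * w i) : pnorm p v ≤ s * pnorm p w := by
  unfold pnorm
  split_ifs with htop
  · refine Real.iSup_le (fun i => (h i).trans ?_)
      (mul_nonneg hs (Real.iSup_nonneg fun _ => abs_nonneg _))
    gcongr
    exact (le_abs_self _).trans (abs_le_iSup_abs w i)
  · have hr : 0 < p.toReal := ENNReal.toReal_pos hp htop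
    calc (∑ i, |v i| ^ p.toReal) ^ (1 / p.toReal)
        ≤ (s ^ p.toReal * ∑ i, |w i| ^ p.toReal) ^ (1 / p.toReal) := by
          rw [mul_sum]
          gcongr with i
          rw [← Real.mul_rpow hs (abs_nonneg _), abs_of_nonneg (hw i)]
          gcongr
          exact h i
      _ = s * (∑ i, |w i| ^ p.toReal) ^ (1 / p.toReal) := by
          rw [Real.mul_rpow (by positivity) (by positivity), ← Real.rpow_mul hs,
            mul_one_div_cancel hr.ne', Real.rpow_one]

lemma epow_nonneg {a : ℝ} (ha : 0 ≤ a) (p : ℝ≥0∞) : 0 ≤ epow a p := by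
  unfold epow
  split_ifs <;> positivity

lemma epow_mul_epow [hpq : p.HolderConjugate q] {a : ℝ} (ha : 0 ≤ a) :
    epow a q * epow a p = a := by
  by_cases hp : p = ⊤
  · simp [epow, hp, (hpq.eq_top_iff_eq_one).mp hp]
  by_cases hq : q = ⊤
  · simp [epow, hq, (hpq.symm.eq_top_iff_eq_one).mp hq]
  have hsum : 1 / q.toReal + 1 / p.toReal = 1 := by
    rw [one_div, one_div, add_comm,
      (ENNReal.HolderConjugate.toReal_of_ne_top hp hq).inv_add_inv_eq_one]
  rw [epow, epow, if_neg hq, if_neg hp, ← Real.rpow_add' ha (by rw [hsum]; exact one_ne_zero), hsum,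
    Real.rpow_one]

lemma sum_abs_le_epow_card_mul_pnorm [hpq : p.HolderConjugate q] (v : Fin n → ℝ)
    (S : Finset (Fin n)) : ∑ i ∈ S, |v i| ≤ epow #S q * pnorm p v := by
  by_cases hp : p = ⊤
  · have hq : q = 1 := hpq.eq_top_iff_eq_one.mp hp
    simp only [pnorm, epow, hp, hq, if_true, ENNReal.one_ne_top, if_false, ENNReal.toReal_one,
      div_one, Real.rpow_one]
    calc ∑ i ∈ S, |v i| ≤ ∑ _i ∈ S, ⨆ j, |v j| :=
          sum_le_sum fun i _ => abs_le_iSup_abs v i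
      _ = #S * ⨆ j, |v j| := by rw [sum_const, nsmul_eq_mul]
  by_cases hq : q = ⊤
  · have hp1 : p = 1 := hpq.symm.eq_top_iff_eq_one.mp hq
    simp only [pnorm, epow, hp1, hq, if_true, ENNReal.one_ne_top, if_false, ENNReal.toReal_one,
      div_one, Real.rpow_one, one_mul]
    exact sum_le_univ_sum_of_nonneg fun i => abs_nonneg _
  have hr := ENNReal.HolderConjugate.toReal_of_ne_top hp hq
  calc ∑ i ∈ S, |v i| = ∑ i ∈ S, |v i| * 1 := by simp
    _ ≤ (∑ i ∈ S, |v i| ^ p.toReal) ^ (1 / p.toReal) *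
          (∑ _i ∈ S, (1:ℝ) ^ q.toReal) ^ (1 / q.toReal) :=
        Real.inner_le_Lp_mul_Lq_of_nonneg S hr (fun i _ => abs_nonneg _) fun _ _ => zero_le_one
    _ ≤ (∑ i, |v i| ^ p.toReal) ^ (1 / p.toReal) * (#S : ℝ) ^ (1 / q.toReal) := by
        rw [Real.one_rpow, sum_const, nsmul_one]
        gcongr
        exact subset_univ S
    _ = epow #S q * pnorm p v := by rw [pnorm, epow, if_neg hp, if_neg hq, mul_comm]

end pnorm

lemma one_sub_mul_pos_of_mul_le {a t e k : ℝ} (ha : 0 ≤ a) (ht : 0 < t) (he : 0 ≤ e)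
    (h : t * e ≤ a * (1 - k * e)) : 0 < 1 - k * e := by
  by_contra! hl
  have : e = 0 := by nlinarith [mul_nonpos_of_nonneg_of_nonpos ha hl]
  norm_num [this] at hl

section Weierstrass

variable {K : Type*} [NormedField K] {n : ℕ} {p q : ℝ≥0∞}

lemma dsep_nonneg (x : Fin n → K) (i : Fin n) : 0 ≤ dsep x i :=
  Real.sInf_nonneg fun _ ⟨_, _, hr⟩ => hr ▸ norm_nonneg _

lemma dsep_le_norm_sub (x : Fin n → K) {i j : Fin n} (hij : j ≠ i) : dsep x i ≤ ‖x i - x j‖ :=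
  csInf_le ⟨0, fun _ ⟨_, _, hr⟩ => hr ▸ norm_nonneg _⟩ ⟨j, hij, rfl⟩

lemma le_dsep {x : Fin n → K} {i j : Fin n} (hij : j ≠ i) {r : ℝ}
    (h : ∀ k, k ≠ i → r ≤ ‖x i - x k‖) : r ≤ dsep x i :=
  le_csInf ⟨_, j, hij, rfl⟩ fun _ ⟨k, hk, hr⟩ => hr ▸ h k hk

lemma dsep_pos {x : Fin n → K} (hx : Function.Injective x) {i j : Fin n} (hij : j ≠ i) :
    0 < dsep x i := by
  have hfin : {r : ℝ | ∃ k, k ≠ i ∧ r = ‖x i - x k‖}.Finite :=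
    (Set.finite_range fun k => ‖x i - x k‖).subset fun _ ⟨k, _, hr⟩ => ⟨k, hr.symm⟩
  obtain ⟨k, hk, hr⟩ := Set.Nonempty.csInf_mem (s := {r : ℝ | ∃ k, k ≠ i ∧ r = ‖x i - x k‖})
    ⟨_, j, hij, rfl⟩ hfin
  rw [dsep, hr]
  exact norm_pos_iff.mpr (sub_ne_zero.mpr (hx.ne hk.symm))

/-- The `i`-th component of `(y - ξ) / d(y)`. -/
noncomputable def relErr (ξ y : Fin n → K) (i : Fin n) : ℝ := ‖y i - ξ i‖ / dsep y i

lemma relErr_nonneg (ξ y : Fin n → K) (i : Fin n) : 0 ≤ relErr ξ y i :=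
  div_nonneg (norm_nonneg _) (dsep_nonneg y i)

lemma norm_sub_le_relErr_mul (ξ : Fin n → K) {y : Fin n → K} (hy : Function.Injective y)
    {i j : Fin n} (hij : j ≠ i) : ‖y i - ξ i‖ ≤ relErr ξ y i * ‖y i - y j‖ := by
  calc ‖y i - ξ i‖ = relErr ξ y i * dsep y i := (div_mul_cancel₀ _ (dsep_pos hy hij).ne').symm
    _ ≤ relErr ξ y i * ‖y i - y j‖ := by
        gcongr
        · exact relErr_nonneg ξ y i
        · exact dsep_le_norm_sub y hij

lemma relErr_add_relErr_le [p.HolderConjugate q] (ξ y : Fin n → K) {i j : Fin n} (hij : i ≠ j) :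
    relErr ξ y i + relErr ξ y j ≤ epow 2 q * pnorm p (relErr ξ y) := by
  have := sum_abs_le_epow_card_mul_pnorm (p := p) (q := q) (relErr ξ y) {i, j}
  rwa [sum_pair hij, card_pair hij, abs_of_nonneg (relErr_nonneg ξ y i),
    abs_of_nonneg (relErr_nonneg ξ y j)] at this

lemma prod_one_add_relErr_le [p.HolderConjugate q] (hn : 2 ≤ n) (ξ y : Fin n → K) {t : ℝ}
    (ht : 0 ≤ t) (h : pnorm p (relErr ξ y) ≤ epow (n - 1) p * ((1 + t) ^ (1 / (n - 1) : ℝ) - 1))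
    (i : Fin n) : ∏ j ∈ univ.erase i, (1 + relErr ξ y j) ≤ 1 + t := by
  have hcardN : #(univ.erase i) = n - 1 := by
    rw [card_erase_of_mem (mem_univ i), card_univ, Fintype.card_fin]
  have hcard : (#(univ.erase i) : ℝ) = n - 1 := by
    rw [hcardN, Nat.cast_sub (by omega), Nat.cast_one]
  have hn1 : (0 : ℝ) ≤ n - 1 := by
    rw [← hcard]; positivity
  refine prod_one_add_le_of_sum_le (card_pos.mp (by omega)) (fun j _ => relErr_nonneg ξ y j)
    (by linarith) ?_
  calc ∑ j ∈ univ.erase i, relErr ξ y j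
      = ∑ j ∈ univ.erase i, |relErr ξ y j| := by simp_rw [abs_of_nonneg (relErr_nonneg ξ y _)]
    _ ≤ epow (n - 1) q * pnorm p (relErr ξ y) := by
        rw [← hcard]; exact sum_abs_le_epow_card_mul_pnorm _ _
    _ ≤ epow (n - 1) q * (epow (n - 1) p * ((1 + t) ^ (1 / (n - 1) : ℝ) - 1)) := by
        gcongr; exact epow_nonneg hn1 q
    _ = #(univ.erase i) * ((1 + t) ^ (1 / #(univ.erase i) : ℝ) - 1) := by
        rw [← mul_assoc, epow_mul_epow hn1, hcard]

noncomputable def weierstrassStep (f : Polynomial K) (y : Fin n → K) : Fin n → K :=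
  fun i => y i - Wcorr f y i

variable {f : Polynomial K} {ξ y : Fin n → K}

lemma Wcorr_eq_mul_prod (hroot : IsRootVector f ξ) (hf : f.leadingCoeff ≠ 0)
    (hy : Function.Injective y) (i : Fin n) :
    Wcorr f y i = (y i - ξ i) * ∏ j ∈ univ.erase i, (1 + (y j - ξ j) / (y i - y j)) := by
  have hratio : ∀ j ∈ univ.erase i, (y i - ξ j) / (y i - y j) = 1 + (y j - ξ j) / (y i - y j) := by
    intro j hj
    have : y i - y j ≠ 0 := sub_ne_zero.mpr (hy.ne (ne_of_mem_erase hj).symm)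
    field_simp
    ring
  rw [Wcorr, hroot, ← mul_prod_erase univ (fun j => y i - ξ j) (mem_univ i),
    mul_div_mul_left _ _ hf, mul_div_assoc, ← prod_div_distrib, prod_congr rfl hratio]

lemma norm_prod_one_add_ratio_sub_one_le (hy : Function.Injective y) {t : ℝ} {i : Fin n}
    (hprod : ∏ j ∈ univ.erase i, (1 + relErr ξ y j) ≤ 1 + t) :
    ‖∏ j ∈ univ.erase i, (1 + (y j - ξ j) / (y i - y j)) - 1‖ ≤ t := by
  refine (norm_prod_one_add_sub_one_le_prod _ _).trans ?_
  suffices ∏ j ∈ univ.erase i, (1 + ‖(y j - ξ j) / (y i - y j)‖) ≤ 1 + t by linarith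
  refine le_trans (prod_le_prod (fun _ _ => by positivity) fun j hj => ?_) hprod
  have hji := ne_of_mem_erase hj
  refine add_le_add_right ?_ 1
  rw [norm_div, norm_sub_rev (y i), div_le_iff₀ (norm_pos_iff.mpr (sub_ne_zero.mpr (hy.ne hji)))]
  exact norm_sub_le_relErr_mul ξ hy hji.symm

lemma norm_weierstrassStep_sub_le (hroot : IsRootVector f ξ) (hf : f.leadingCoeff ≠ 0)
    (hy : Function.Injective y) {t : ℝ} {i : Fin n}
    (hprod : ∏ j ∈ univ.erase i, (1 + relErr ξ y j) ≤ 1 + t) :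
    ‖weierstrassStep f y i - ξ i‖ ≤ t * ‖y i - ξ i‖ := by
  have hP := norm_prod_one_add_ratio_sub_one_le hy hprod
  rw [weierstrassStep, Wcorr_eq_mul_prod hroot hf hy,
    show ∀ a b P : K, a - (a - b) * P - b = (a - b) * -(P - 1) by intros; ring,
    norm_mul, norm_neg, mul_comm]
  gcongr

lemma norm_Wcorr_le (hroot : IsRootVector f ξ) (hf : f.leadingCoeff ≠ 0)
    (hy : Function.Injective y) {t : ℝ} {i : Fin n}
    (hprod : ∏ j ∈ univ.erase i, (1 + relErr ξ y j) ≤ 1 + t) :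
    ‖Wcorr f y i‖ ≤ (1 + t) * ‖y i - ξ i‖ := by
  have hP := norm_prod_one_add_ratio_sub_one_le hy hprod
  have := norm_le_norm_sub_add (∏ j ∈ univ.erase i, (1 + (y j - ξ j) / (y i - y j))) 1
  rw [Wcorr_eq_mul_prod hroot hf hy, norm_mul, mul_comm]
  gcongr
  rw [norm_one] at this
  linarith

lemma mul_norm_sub_le_norm_sub_of_close [p.HolderConjugate q] (hy : Function.Injective y)
    {z : Fin n → K} {C e : ℝ} (hC : 0 ≤ C) (hz : ∀ i, ‖y i - z i‖ ≤ C * ‖y i - ξ i‖)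
    (he : pnorm p (relErr ξ y) ≤ e) {i j : Fin n} (hij : i ≠ j) :
    (1 - epow 2 q * C * e) * ‖y i - y j‖ ≤ ‖z i - z j‖ := by
  have hi : ‖y i - z i‖ ≤ C * relErr ξ y i * ‖y i - y j‖ := by
    rw [mul_assoc]; exact (hz i).trans (by gcongr; exact norm_sub_le_relErr_mul ξ hy hij.symm)
  have hj : ‖z j - y j‖ ≤ C * relErr ξ y j * ‖y i - y j‖ := by
    rw [mul_assoc, norm_sub_rev, norm_sub_rev (y i)]
    exact (hz j).trans (by gcongr; exact norm_sub_le_relErr_mul ξ hy hij)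
  have hsum :
      C * (relErr ξ y i + relErr ξ y j) * ‖y i - y j‖ ≤ C * (epow 2 q * e) * ‖y i - y j‖ := by
    gcongr
    exact (relErr_add_relErr_le ξ y hij).trans (by gcongr; exact epow_nonneg two_pos.le q)
  have htri := (norm_sub_le_norm_sub_add_norm_sub (y i) (z i) (y j)).trans
    (add_le_add le_rfl (norm_sub_le_norm_sub_add_norm_sub (z i) (z j) (y j)))
  linarith

lemma injective_of_mul_norm_sub_le (hy : Function.Injective y) {z : Fin n → K} {l : ℝ}
    (hl : 0 < l) (h : ∀ i j, i ≠ j → l * ‖y i - y j‖ ≤ ‖z i - z j‖) : Function.Injective z := by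
  intro i j hz
  by_contra hij
  have := h i j hij
  rw [hz, sub_self, norm_zero] at this
  exact this.not_gt (mul_pos hl (norm_pos_iff.mpr (sub_ne_zero.mpr (hy.ne hij))))

lemma mul_dsep_le_dsep (hn : 2 ≤ n) {z : Fin n → K} {l : ℝ} (hl : 0 ≤ l)
    (h : ∀ i j, i ≠ j → l * ‖y i - y j‖ ≤ ‖z i - z j‖) (i : Fin n) :
    l * dsep y i ≤ dsep z i := by
  have : Nontrivial (Fin n) := Fin.nontrivial_iff_two_le.mpr hn
  obtain ⟨j, hj⟩ := exists_ne i
  exact le_dsep hj fun k hk =>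
    (mul_le_mul_of_nonneg_left (dsep_le_norm_sub y hk) hl).trans (h i k hk.symm)

theorem weierstrassStep_bounds [p.HolderConjugate q] (hn : 2 ≤ n) (hroot : IsRootVector f ξ)
    (hf : f.leadingCoeff ≠ 0) (hy : Function.Injective y) {t e : ℝ} (ht : 0 ≤ t)
    (he : pnorm p (relErr ξ y) ≤ e)
    (he_le : e ≤ epow (n - 1) p * ((1 + t) ^ (1 / (n - 1) : ℝ) - 1))
    (hl : 0 < 1 - epow 2 q * (1 + t) * e) :
    (∀ i, ‖weierstrassStep f y i - ξ i‖ ≤ t * ‖y i - ξ i‖) ∧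
      Function.Injective (weierstrassStep f y) ∧
      pnorm p (relErr ξ (weierstrassStep f y)) ≤ t * e / (1 - epow 2 q * (1 + t) * e) := by
  set l := 1 - epow 2 q * (1 + t) * e
  have hprod := prod_one_add_relErr_le (q := q) hn ξ y ht (he.trans he_le)
  have hcontr i := norm_weierstrassStep_sub_le hroot hf hy (hprod i)
  have hsep : ∀ i j, i ≠ j → l * ‖y i - y j‖ ≤ ‖weierstrassStep f y i - weierstrassStep f y j‖ :=
    fun i j => mul_norm_sub_le_norm_sub_of_close hy (by linarith)
      (fun i => by rw [weierstrassStep, sub_sub_cancel]; exact norm_Wcorr_le hroot hf hy (hprod i))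
      he
  have hinj := injective_of_mul_norm_sub_le hy hl hsep
  refine ⟨hcontr, hinj, ?_⟩
  have hrel : ∀ i, |relErr ξ (weierstrassStep f y) i| ≤ t / l * relErr ξ y i := fun i => by
    have : Nontrivial (Fin n) := Fin.nontrivial_iff_two_le.mpr hn
    obtain ⟨j, hj⟩ := exists_ne i
    rw [abs_of_nonneg (relErr_nonneg _ _ i), relErr, relErr, div_mul_div_comm]
    exact div_le_div₀ (by positivity) (hcontr i) (mul_pos hl (dsep_pos hy hj))
      (mul_dsep_le_dsep hn hl.le hsep i)
  calc pnorm p (relErr ξ (weierstrassStep f y)) ≤ t / l * pnorm p (relErr ξ y) :=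
        pnorm_le_mul_of_abs_le (ENNReal.HolderConjugate.ne_zero p q) (by positivity)
          (relErr_nonneg ξ y) hrel
    _ ≤ t * e / l := by rw [div_mul_eq_mul_div]; gcongr

theorem weierstrassStep_bounds_of_control [p.HolderConjugate q] (hn : 2 ≤ n)
    (hroot : IsRootVector f ξ) (hf : f.leadingCoeff ≠ 0) (hy : Function.Injective y)
    {c : ℝ → ℝ} {t : ℝ} (ht : 0 < t) (hct : 0 ≤ c t) (hct2 : 0 ≤ c (t ^ 2))
    (hc_bound : c t ≤ epow (n - 1) p * ((1 + t) ^ (1 / (n - 1) : ℝ) - 1))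
    (hc_step : t * c t ≤ c (t ^ 2) * (1 - epow 2 q * (1 + t) * c t))
    (he : pnorm p (relErr ξ y) ≤ c t) :
    (∀ i, ‖weierstrassStep f y i - ξ i‖ ≤ t * ‖y i - ξ i‖) ∧
      Function.Injective (weierstrassStep f y) ∧
      pnorm p (relErr ξ (weierstrassStep f y)) ≤ c (t ^ 2) := by
  have hl := one_sub_mul_pos_of_mul_le hct2 ht hct hc_step
  obtain ⟨hcontr, hinj, hrel⟩ := weierstrassStep_bounds hn hroot hf hy ht.le he hc_bound hl
  exact ⟨hcontr, hinj, hrel.trans ((div_le_iff₀ hl).mpr (by linarith))⟩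

lemma injective_of_pnorm_relErr_le [p.HolderConjugate q] (hy : Function.Injective y) {e : ℝ}
    (he : pnorm p (relErr ξ y) ≤ e) (h : epow 2 q * e < 1) : Function.Injective ξ :=
  injective_of_mul_norm_sub_le hy (l := 1 - epow 2 q * 1 * e) (by linarith) fun _ _ hij =>
    mul_norm_sub_le_norm_sub_of_close hy zero_le_one (fun i => (one_mul _).ge) he hij

end Weierstrass

lemma le_pow_two_pow_sub_one_mul {a : ℕ → ℝ} {σ : ℝ} (hσ : 0 ≤ σ)
    (h : ∀ k, a (k + 1) ≤ σ ^ 2 ^ k * a k) : ∀ k, a k ≤ σ ^ (2 ^ k - 1) * a 0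
  | 0 => by simp
  | k + 1 => calc
      a (k + 1) ≤ σ ^ 2 ^ k * (σ ^ (2 ^ k - 1) * a 0) :=
        (h k).trans (by gcongr; exact le_pow_two_pow_sub_one_mul hσ h k)
      _ = σ ^ (2 ^ (k + 1) - 1) * a 0 := by
        rw [← mul_assoc, ← pow_add, pow_succ]
        congr 2
        have := Nat.one_le_two_pow (n := k)
        omega

lemma tendsto_of_norm_sub_le_pow_two_pow_sub_one {E : Type*} [SeminormedAddCommGroup E]
    {u : ℕ → E} {a : E} {σ C : ℝ} (h0 : 0 ≤ σ) (h1 : σ < 1)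
    (h : ∀ k, ‖u k - a‖ ≤ σ ^ (2 ^ k - 1) * C) : Tendsto u atTop (𝓝 a) := by
  have hpow : Tendsto (fun k : ℕ => σ ^ (2 ^ k - 1)) atTop (𝓝 0) :=
    (tendsto_pow_atTop_nhds_zero_of_lt_one h0 h1).comp <|
      tendsto_atTop_mono (fun _ => Nat.le_sub_one_of_lt Nat.lt_two_pow_self) tendsto_id
  rw [tendsto_iff_norm_sub_tendsto_zero]
  exact squeeze_zero (fun _ => norm_nonneg _) h (by simpa using hpow.mul_const C)

theorem weierstrass_local_convergence_third_general
    {K : Type*} [NormedField K] {n : ℕ} (hn : 2 ≤ n)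
    (f : Polynomial K) (hdeg : f.natDegree = n)
    (ξ : Fin n → K) (hroot : IsRootVector f ξ)
    (p q : ℝ≥0∞) (hpq : 1 / p + 1 / q = 1)
    (c : ℝ → ℝ)
    (hc_nonneg : ∀ t ∈ Set.Ico (0:ℝ) 1, 0 ≤ c t)
    (hc_bound : ∀ t ∈ Set.Ico (0:ℝ) 1,
      c t ≤ epow ((n : ℝ) - 1) p * ((1 + t) ^ ((1:ℝ) / ((n:ℝ) - 1)) - 1))
    (σ : ℝ) (hσ : σ ∈ Set.Ioo (0:ℝ) 1)
    (hσc : ∀ t ∈ Set.Icc (0:ℝ) σ,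
      t * c t ≤ c (t ^ 2) * (1 - epow 2 q * (1 + t) * c t))
    (x : ℕ → Fin n → K) (hx0 : Function.Injective (x 0))
    (hinit : pnorm p (fun i => ‖x 0 i - ξ i‖ / dsep (x 0) i) ≤ c σ)
    (hiter : ∀ k : ℕ, x (k+1) = fun i => x k i - Wcorr f (x k) i) :
    Function.Injective ξ ∧
    (∀ k : ℕ, Function.Injective (x k)) ∧
    (∀ i : Fin n, Filter.Tendsto (fun k => x k i) Filter.atTop (nhds (ξ i))) ∧
    (∀ k : ℕ, ∀ i : Fin n, ‖x (k+1) i - ξ i‖ ≤ σ ^ 2 ^ k * ‖x k i - ξ i‖) ∧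
    (∀ k : ℕ, ∀ i : Fin n, ‖x k i - ξ i‖ ≤ σ ^ (2 ^ k - 1) * ‖x 0 i - ξ i‖) := by
  have : p.HolderConjugate q := ENNReal.holderConjugate_iff.mpr (by simpa [one_div] using hpq)
  have hf : f.leadingCoeff ≠ 0 :=
    Polynomial.leadingCoeff_ne_zero.mpr (by rintro rfl; simp at hdeg; omega)
  obtain ⟨hσ0, hσ1⟩ := hσ
  have hI : ∀ t ∈ Set.Ioc 0 σ, t ∈ Set.Ico (0:ℝ) 1 ∧ t ^ 2 ∈ Set.Ico (0:ℝ) 1 := fun t ht =>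
    ⟨⟨ht.1.le, ht.2.trans_lt hσ1⟩, sq_nonneg t, by nlinarith [ht.1, ht.2]⟩
  have hstep t (ht : t ∈ Set.Ioc 0 σ) y (hy : Function.Injective y)
      (he : pnorm p (relErr ξ y) ≤ c t) :=
    weierstrassStep_bounds_of_control (q := q) hn hroot hf hy ht.1 (hc_nonneg t (hI t ht).1)
      (hc_nonneg _ (hI t ht).2) (hc_bound t (hI t ht).1) (hσc t ⟨ht.1.le, ht.2⟩) he
  have hpow : ∀ k : ℕ, σ ^ 2 ^ k ∈ Set.Ioc 0 σ := fun k =>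
    ⟨by positivity, pow_le_of_le_one hσ0.le hσ1.le (by positivity)⟩
  have hinv : ∀ k, Function.Injective (x k) ∧ pnorm p (relErr ξ (x k)) ≤ c (σ ^ 2 ^ k) := by
    intro k
    induction k with
    | zero => simpa using ⟨hx0, hinit⟩
    | succ k ih =>
      rw [hiter k, pow_succ, pow_mul]
      exact (hstep _ (hpow k) _ ih.1 ih.2).2
  have hcontr : ∀ k i, ‖x (k + 1) i - ξ i‖ ≤ σ ^ 2 ^ k * ‖x k i - ξ i‖ := fun k i => by
    rw [hiter k]
    exact (hstep _ (hpow k) _ (hinv k).1 (hinv k).2).1 i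
  have hbound i := le_pow_two_pow_sub_one_mul (a := (‖x · i - ξ i‖)) hσ0.le (hcontr · i)
  refine ⟨injective_of_pnorm_relErr_le (q := q) hx0 hinit ?_, fun k => (hinv k).1,
    fun i => tendsto_of_norm_sub_le_pow_two_pow_sub_one hσ0.le hσ1 (hbound i), hcontr,
    fun k i => hbound i k⟩
  have hI := hI σ ⟨hσ0, le_rfl⟩
  have := one_sub_mul_pos_of_mul_le (hc_nonneg _ hI.2) hσ0 (hc_nonneg σ hI.1)
    (hσc σ ⟨hσ0.le, le_rfl⟩)
  nlinarith [epow_nonneg two_pos.le q, hc_nonneg σ hI.1]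

/-- third local convergence theorem for the Weierstrass method, with a
nondecreasing control function `c : [0,1) → ℝ₊` satisfying
`c(t) ≤ (n−1)^{1/p}((1+t)^{1/(n−1)} − 1)` and, for some `σ ∈ (0,1)`,
`t·c(t) ≤ c(t²)(1 − 2^{1/q}(1+t)c(t))` on `[0,σ]`. -/
theorem weierstrass_local_convergence_third
    {K : Type*} [NormedField K] {n : ℕ} (hn : 2 ≤ n)
    (f : Polynomial K) (hdeg : f.natDegree = n)
    (ξ : Fin n → K) (hroot : IsRootVector f ξ)
    (p q : ℝ≥0∞) (hp : 1 ≤ p) (hpq : 1 / p + 1 / q = 1)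
    (c : ℝ → ℝ)
    (hc_nonneg : ∀ t ∈ Set.Ico (0:ℝ) 1, 0 ≤ c t)
    (hc_mono : ∀ s ∈ Set.Ico (0:ℝ) 1, ∀ t ∈ Set.Ico (0:ℝ) 1, s ≤ t → c s ≤ c t)
    (hc_bound : ∀ t ∈ Set.Ico (0:ℝ) 1,
      c t ≤ epow ((n : ℝ) - 1) p * ((1 + t) ^ ((1:ℝ) / ((n:ℝ) - 1)) - 1))
    (σ : ℝ) (hσ : σ ∈ Set.Ioo (0:ℝ) 1)
    (hσc : ∀ t ∈ Set.Icc (0:ℝ) σ,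
      t * c t ≤ c (t ^ 2) * (1 - epow 2 q * (1 + t) * c t))
    (x : ℕ → Fin n → K) (hx0 : Function.Injective (x 0))
    (hinit : pnorm p (fun i => ‖x 0 i - ξ i‖ / dsep (x 0) i) ≤ c σ)
    (hiter : ∀ k : ℕ, x (k+1) = fun i => x k i - Wcorr f (x k) i) :
    Function.Injective ξ ∧
    (∀ k : ℕ, Function.Injective (x k)) ∧
    (∀ i : Fin n, Filter.Tendsto (fun k => x k i) Filter.atTop (nhds (ξ i))) ∧
    (∀ k : ℕ, ∀ i : Fin n, ‖x (k+1) i - ξ i‖ ≤ σ ^ 2 ^ k * ‖x k i - ξ i‖) ∧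
    (∀ k : ℕ, ∀ i : Fin n, ‖x k i - ξ i‖ ≤ σ ^ (2 ^ k - 1) * ‖x 0 i - ξ i‖) :=
  weierstrass_local_convergence_third_general hn f hdeg ξ hroot p q hpq c hc_nonneg hc_bound σ hσ
    hσc x hx0 hinit hiter
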